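/- arXiv:1711.04072 — 5 statements merged into one kernel-verified Lean document; each statement's English description precedes it below -/
import Mathlib

section
/- All complex solutions of the equation tan(z) = z are real. That is, if z ∈ ℂ satisfies tan(z) = z, then z ∈ ℝ. -/
lemma aux_sinh_lt_mul_cosh {t : ℝ} (ht : 0 < t) : Real.sinh t < t * Real.cosh t := by
  have hmono : StrictMonoOn (fun s : ℝ => s * Real.cosh s - Real.sinh s) (Set.Ici 0) := by
    apply strictMonoOn_of_deriv_pos (convex_Ici 0)
    · fun_prop
    · intro s hs
      rw [interior_Ici, Set.mem_Ioi] at hs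
      have h1 : HasDerivAt (fun s : ℝ => s * Real.cosh s - Real.sinh s)
          (1 * Real.cosh s + s * Real.sinh s - Real.cosh s) s :=
        ((hasDerivAt_id s).mul (Real.hasDerivAt_cosh s)).sub (Real.hasDerivAt_sinh s)
      rw [h1.deriv]
      have h2 : 0 < Real.sinh s := Real.sinh_pos_iff.2 hs
      nlinarith [mul_pos hs h2]
  have := hmono (Set.self_mem_Ici) (Set.mem_Ici.2 ht.le) ht
  simpa using this

theorem complex_tan_fixed_points_are_real (z : ℂ) (h : Complex.tan z = z) :
    ∃ x : ℝ, z = (x : ℂ) := by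
  by_cases him : z.im = 0
  · exact ⟨z.re, by apply Complex.ext <;> simp [him]⟩
  exfalso
  have hcos : Complex.cos z ≠ 0 := by
    intro hc
    rw [Complex.tan_eq_sin_div_cos, hc, div_zero] at h
    rw [← h] at hc
    simp [Complex.cos_zero] at hc
  have hs : Complex.sin z = z * Complex.cos z := by
    rw [Complex.tan_eq_sin_div_cos, div_eq_iff hcos] at h
    rw [← h]
  set x := z.re with hx
  set y := z.im with hy
  have hz : z = (x : ℂ) + (y : ℂ) * Complex.I := (Complex.re_add_im z).symm
  have hsin : Complex.sin z =
      ((Real.sin x * Real.cosh y : ℝ) : ℂ) + ((Real.cos x * Real.sinh y : ℝ) : ℂ) * Complex.I := by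
    rw [hz, Complex.sin_add, Complex.sin_mul_I, Complex.cos_mul_I]
    push_cast
    ring
  have hcosz : Complex.cos z =
      ((Real.cos x * Real.cosh y : ℝ) : ℂ) - ((Real.sin x * Real.sinh y : ℝ) : ℂ) * Complex.I := by
    rw [hz, Complex.cos_add, Complex.sin_mul_I, Complex.cos_mul_I]
    push_cast
    ring
  have key : ((Real.sin x * Real.cosh y : ℝ) : ℂ) + ((Real.cos x * Real.sinh y : ℝ) : ℂ) * Complex.I
      = ((x : ℂ) + (y : ℂ) * Complex.I) *
        (((Real.cos x * Real.cosh y : ℝ) : ℂ) - ((Real.sin x * Real.sinh y : ℝ) : ℂ) * Complex.I) := by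
    rw [← hsin, ← hcosz, ← hz]
    exact hs
  have e1 := congrArg Complex.re key
  have e2 := congrArg Complex.im key
  simp only [Complex.add_re, Complex.add_im, Complex.sub_re, Complex.sub_im, Complex.mul_re,
    Complex.mul_im, Complex.I_re, Complex.I_im, Complex.ofReal_re, Complex.ofReal_im,
    mul_zero, mul_one, zero_mul, sub_zero, zero_sub, add_zero, zero_add] at e1 e2
  set M : ℝ := Real.cos x ^ 2 * Real.cosh y ^ 2 + Real.sin x ^ 2 * Real.sinh y ^ 2 with hM
  have hyM : Real.sinh y * Real.cosh y = y * M := by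
    rw [hM]
    linear_combination (Real.cos x * Real.cosh y) * e2 + (Real.sin x * Real.sinh y) * e1 - (Real.sinh y * Real.cosh y) * (Real.sin_sq_add_cos_sq x)
  have hxM : Real.sin x * Real.cos x = x * M := by
    rw [hM]
    linear_combination (Real.cos x * Real.cosh y) * e1 - (Real.sin x * Real.sinh y) * e2 - (Real.sin x * Real.cos x) * (Real.cosh_sq_sub_sinh_sq y)
  have hsinh : |y| < Real.sinh |y| := Real.self_lt_sinh_iff.2 (abs_pos.2 him)
  have hcosh1 : 1 ≤ Real.cosh y := Real.one_le_cosh y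
  have hM1 : 1 < M := by
    have habs : |y| * M = Real.sinh |y| * Real.cosh y := by
      rw [← Real.abs_sinh, ← abs_of_nonneg (a := Real.cosh y) (by linarith), ← abs_mul, hyM,
        abs_mul, abs_of_nonneg (a := M) (by positivity)]
    have hy0 : 0 < |y| := abs_pos.2 him
    nlinarith
  have hx0 : x = 0 := by
    by_contra hx0
    have h1 : |Real.sin x * Real.cos x| ≤ |x| := by
      rw [abs_mul]
      calc |Real.sin x| * |Real.cos x| ≤ |x| * 1 :=
            mul_le_mul Real.abs_sin_le_abs (Real.abs_cos_le_one x) (abs_nonneg _) (abs_nonneg _)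
        _ = |x| := mul_one _
    rw [hxM, abs_mul, abs_of_nonneg (a := M) (by positivity)] at h1
    have : 0 < |x| := abs_pos.2 hx0
    nlinarith
  rw [hx0] at e2
  simp only [Real.sin_zero, Real.cos_zero, zero_mul, one_mul, mul_zero, add_zero, zero_add,
    neg_zero, sub_zero] at e2
  rcases lt_or_gt_of_ne him with hneg | hpos
  · have h2 := aux_sinh_lt_mul_cosh (t := -y) (by simpa using hneg)
    rw [Real.sinh_neg, Real.cosh_neg] at h2
    nlinarith
  · have h2 := aux_sinh_lt_mul_cosh hpos
    nlinarith
end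

section
/- Let λ_j be the unique solution of tan(x) = x in (jπ + π/4, jπ + π/2) for each positive integer j. Then |cos(λ_j)| > |cos(λ_{j+1})| for all j ≥ 1. -/
open Real

lemma cos_sq_of_tan_eq (x : ℝ) (hx : 0 < x) (ht : Real.tan x = x) :
    Real.cos x ^ 2 = 1 / (1 + x ^ 2) := by
  have hc : Real.cos x ≠ 0 := by
    intro h
    rw [Real.tan_eq_sin_div_cos, h, div_zero] at ht
    exact hx.ne ht
  have h1 : (1 + Real.tan x ^ 2)⁻¹ = Real.cos x ^ 2 := Real.inv_one_add_tan_sq hc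
  rw [ht] at h1
  rw [← h1, one_div]

theorem abs_cos_lambda_strict_anti (lam : ℕ → ℝ)
    (hmem : ∀ j : ℕ, 1 ≤ j → lam j ∈ Set.Ioo (j * π + π / 4) (j * π + π / 2))
    (hroot : ∀ j : ℕ, 1 ≤ j → Real.tan (lam j) = lam j) :
    ∀ j : ℕ, 1 ≤ j → |Real.cos (lam (j + 1))| < |Real.cos (lam j)| := by
  intro j hj
  have hπ := Real.pi_pos
  obtain ⟨hl1, hl2⟩ := hmem j hj
  obtain ⟨hl3, hl4⟩ := hmem (j + 1) (by omega)
  have hjR : (1 : ℝ) ≤ j := by exact_mod_cast hj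
  have hpos : 0 < lam j := by nlinarith
  have hlt : lam j < lam (j + 1) := by
    push_cast at hl3
    nlinarith
  have hpos' : 0 < lam (j + 1) := hpos.trans hlt
  have e1 := cos_sq_of_tan_eq _ hpos (hroot j hj)
  have e2 := cos_sq_of_tan_eq _ hpos' (hroot (j + 1) (by omega))
  have hsq : Real.cos (lam (j + 1)) ^ 2 < Real.cos (lam j) ^ 2 := by
    rw [e1, e2]
    apply div_lt_div_of_pos_left one_pos (by positivity)
    nlinarith
  rw [← sq_abs (Real.cos (lam (j+1))), ← sq_abs (Real.cos (lam j))] at hsq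
  exact lt_of_pow_lt_pow_left₀ 2 (abs_nonneg _) hsq
end

section
/- For every nonnegative integer n and real x with sin(x) ≠ 0, ∑_{ℓ=0}^{n} (ℓ+1)(n−ℓ+1) e^{2iℓx} · e^{−inx} equals ((n+3) sin((n+1)x) − (n+1) sin((n+3)x)) / (4 sin³(x)). -/
lemma geom_deriv_sum (m : ℕ) (w : ℂ) :
    (∑ l ∈ Finset.range (m + 1), ((l : ℂ) + 1) * w ^ l) * (w - 1) ^ 2
      = ((m : ℂ) + 1) * w ^ (m + 2) - ((m : ℂ) + 2) * w ^ (m + 1) + 1 := by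
  induction m with
  | zero => simp; ring
  | succ k ih =>
    rw [Finset.sum_range_succ, add_mul]
    push_cast
    push_cast at ih
    linear_combination ih

lemma conv_sum_key (n : ℕ) (w : ℂ) :
    (∑ l ∈ Finset.range (n + 1), ((l : ℂ) + 1) * ((n : ℂ) - l + 1) * w ^ l) * (w - 1) ^ 3
      = ((n : ℂ) + 1) * w ^ (n + 3) - ((n : ℂ) + 3) * w ^ (n + 2)
        + ((n : ℂ) + 3) * w - ((n : ℂ) + 1) := by
  induction n with
  | zero => simp; ring
  | succ k ih =>
    have split : (∑ l ∈ Finset.range (k + 2), ((l : ℂ) + 1) * (((k : ℕ) + 1 : ℕ) - (l : ℂ) + 1) * w ^ l)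
        = (∑ l ∈ Finset.range (k + 1), ((l : ℂ) + 1) * ((k : ℂ) - l + 1) * w ^ l)
          + ∑ l ∈ Finset.range (k + 2), ((l : ℂ) + 1) * w ^ l := by
      have h : ∀ l ∈ Finset.range (k + 2),
          ((l : ℂ) + 1) * (((k : ℕ) + 1 : ℕ) - (l : ℂ) + 1) * w ^ l
            = ((l : ℂ) + 1) * ((k : ℂ) - l + 1) * w ^ l + ((l : ℂ) + 1) * w ^ l := by
        intro l _; push_cast; ring
      rw [Finset.sum_congr rfl h, Finset.sum_add_distrib,
        Finset.sum_range_succ (fun l => ((l : ℂ) + 1) * ((k : ℂ) - l + 1) * w ^ l) (k + 1)]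
      push_cast
      ring
    push_cast at split ⊢
    rw [split, add_mul]
    have hg := geom_deriv_sum (k + 1) w
    push_cast at hg
    linear_combination ih + (w - 1) * hg

theorem finite_exp_sum_identity (n : ℕ) (x : ℝ)
    (h1 : Complex.exp (Complex.I * x) ≠ 1) (h2 : Real.sin x ≠ 0) :
    (∑ l ∈ Finset.range (n + 1),
        ((l : ℂ) + 1) * ((n : ℂ) - l + 1) * Complex.exp (2 * Complex.I * l * x))
        * Complex.exp (-(Complex.I) * n * x)
      = (((n : ℂ) + 3) * Real.sin (((n : ℝ) + 1) * x)
          - ((n : ℂ) + 1) * Real.sin (((n : ℝ) + 3) * x)) / (4 * (Real.sin x : ℂ) ^ 3) := by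
  set E := Complex.exp (Complex.I * x) with hE
  have hE0 : E ≠ 0 := Complex.exp_ne_zero _
  have hexp2 : ∀ l : ℕ, Complex.exp (2 * Complex.I * l * x) = (E ^ 2) ^ l := by
    intro l
    rw [← pow_mul, hE, ← Complex.exp_nat_mul]
    congr 1; push_cast; ring
  have hexpn : Complex.exp (-(Complex.I) * n * x) = (E ⁻¹) ^ n := by
    rw [show -(Complex.I) * (n : ℂ) * (x : ℂ) = -((n : ℂ) * (Complex.I * x)) by ring,
      Complex.exp_neg, Complex.exp_nat_mul, inv_pow]
  have hsinm : ∀ m : ℕ, ((Real.sin ((m : ℝ) * x) : ℝ) : ℂ) = ((E⁻¹) ^ m - E ^ m) * Complex.I / 2 := by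
    intro m
    rw [Complex.ofReal_sin, Complex.sin,
      show (-(((m : ℝ) * x : ℝ) : ℂ) * Complex.I) = -((m : ℂ) * (Complex.I * x)) by push_cast; ring,
      show ((((m : ℝ) * x : ℝ) : ℂ) * Complex.I) = (m : ℂ) * (Complex.I * x) by push_cast; ring,
      Complex.exp_neg, Complex.exp_nat_mul, inv_pow]
  have hsin : ((Real.sin x : ℝ) : ℂ) = (E⁻¹ - E) * Complex.I / 2 := by
    have := hsinm 1; simpa using this
  have h2' : ((Real.sin x : ℝ) : ℂ) ≠ 0 := Complex.ofReal_ne_zero.mpr h2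
  have hw : E ^ 2 - 1 ≠ 0 := by
    intro h
    apply h2'
    have hE2 : E ^ 2 = 1 := by linear_combination h
    have hinv : E⁻¹ = E := by
      field_simp
      linear_combination -hE2
    rw [hsin, hinv]; ring
  have hS := conv_sum_key n (E ^ 2)
  have hSdiv : (∑ l ∈ Finset.range (n + 1), ((l : ℂ) + 1) * ((n : ℂ) - l + 1) * (E ^ 2) ^ l)
      = (((n : ℂ) + 1) * (E ^ 2) ^ (n + 3) - ((n : ℂ) + 3) * (E ^ 2) ^ (n + 2)
        + ((n : ℂ) + 3) * (E ^ 2) - ((n : ℂ) + 1)) / (E ^ 2 - 1) ^ 3 := by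
    rw [eq_div_iff (pow_ne_zero 3 hw)]
    exact hS
  have hI := Complex.I_ne_zero
  have hsinm2 : ∀ m : ℕ, ((Real.sin ((m : ℝ) * x) : ℝ) : ℂ)
      = (1 - E ^ (2 * m)) * Complex.I / (2 * E ^ m) := by
    intro m
    rw [hsinm m, inv_pow]
    field_simp
    ring
  have hEinv : E * E⁻¹ = 1 := mul_inv_cancel₀ hE0
  have hfac : E ^ 2 - 1 = 2 * Complex.I * E * ((Real.sin x : ℝ) : ℂ) := by
    rw [hsin]
    linear_combination (E ^ 2 - 1) * Complex.I_sq - (Complex.I ^ 2) * hEinv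
  have hcube : (E ^ 2 - 1) ^ 3
      = -(8 : ℂ) * Complex.I * E ^ 3 * ((Real.sin x : ℝ) : ℂ) ^ 3 := by
    rw [hfac]
    linear_combination (8 * Complex.I * E ^ 3 * ((Real.sin x : ℝ) : ℂ) ^ 3) * Complex.I_sq
  simp only [hexp2, hexpn, inv_pow]
  set S := ∑ l ∈ Finset.range (n + 1), ((l : ℂ) + 1) * ((n : ℂ) - l + 1) * (E ^ 2) ^ l with hSdef
  have hs0 : ((Real.sin x : ℝ) : ℂ) ≠ 0 := h2'
  have hSdiv2 : S = (((n : ℂ) + 1) * (E ^ 2) ^ (n + 3) - ((n : ℂ) + 3) * (E ^ 2) ^ (n + 2)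
        + ((n : ℂ) + 3) * E ^ 2 - ((n : ℂ) + 1)) * Complex.I
      / (8 * E ^ 3 * ((Real.sin x : ℝ) : ℂ) ^ 3) := by
    rw [eq_div_iff (mul_ne_zero (mul_ne_zero (by norm_num) (pow_ne_zero _ hE0)) (pow_ne_zero _ hs0))]
    rw [hcube] at hS
    linear_combination Complex.I * hS + 8 * S * E ^ 3 * ((Real.sin x : ℝ) : ℂ) ^ 3 * Complex.I_sq
  rw [hSdiv2,
    show ((n : ℝ) + 1) = ((n + 1 : ℕ) : ℝ) by push_cast; ring,
    show ((n : ℝ) + 3) = ((n + 3 : ℕ) : ℝ) by push_cast; ring,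
    hsinm2 (n + 1), hsinm2 (n + 3)]
  set s := ((Real.sin x : ℝ) : ℂ) with hsdef
  clear_value E s
  have hEn : ∀ m : ℕ, E ^ m ≠ 0 := fun m => pow_ne_zero m hE0
  rw [← div_eq_mul_inv, div_div,
    div_eq_div_iff (by exact mul_ne_zero (mul_ne_zero (mul_ne_zero (by norm_num) (hEn 3)) (pow_ne_zero 3 hs0)) (hEn n))
      (by exact mul_ne_zero (by norm_num) (pow_ne_zero 3 hs0)),
    mul_comm, ← sub_eq_zero]
  field_simp
  ring
end

section
/- Let θ ∈ (0,2), θ ≠ 1, and define the 2×2 matrix A(z,θ) = −(1/2)I + [[a₁₁, a₁₂],[a₂₁, a₂₂]] where a₁₁(z,θ) = ((z+1) sin(πθ) cos(πz(1−θ)) − sin(π(z(1−θ)+θ)))/(2 sin(πz)), a₁₂(z,θ) = −(z−1) sin(πθ) sin(πz(1−θ))/(2 sin(πz)), a₂₁(z,θ) = (z+1) sin(πθ) sin(πz(1−θ))/(2 sin(πz)), a₂₂(z,θ) = ((z+1) sin(πθ) cos(πz(1−θ)) + sin(π(z(1−θ)−θ)))/(2 sin(πz)). Then for z ∈ ℂ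 not an integer, det A(z,θ) = (z sin(πθ) − sin(πzθ)) (z sin(πθ) − sin(πz(2−θ))) / (4 sin²(πz)). -/
/-! After clearing the common denominator `2 sin (π z)`, the determinant becomes a trigonometric
polynomial in `α = π z (1 - θ)`, `β = π θ`, `γ = π z θ` (so that `π z = α + γ` and
`π z (2 - θ) = 2 α + γ`); expanding by the addition formulas, it factors modulo the Pythagorean
identities `sin² + cos² = 1` for `α`, `β` and `γ`. -/

open Real

noncomputable def a11 (z θ : ℂ) : ℂ :=
  ((z + 1) * Complex.sin ((π : ℂ) * θ) * Complex.cos ((π : ℂ) * z * (1 - θ))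
    - Complex.sin ((π : ℂ) * (z * (1 - θ) + θ))) / (2 * Complex.sin ((π : ℂ) * z))

noncomputable def a12 (z θ : ℂ) : ℂ :=
  -((z - 1) * Complex.sin ((π : ℂ) * θ) * Complex.sin ((π : ℂ) * z * (1 - θ)))
    / (2 * Complex.sin ((π : ℂ) * z))

noncomputable def a21 (z θ : ℂ) : ℂ :=
  ((z + 1) * Complex.sin ((π : ℂ) * θ) * Complex.sin ((π : ℂ) * z * (1 - θ)))
    / (2 * Complex.sin ((π : ℂ) * z))

noncomputable def a22 (z θ : ℂ) : ℂ :=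
  ((z + 1) * Complex.sin ((π : ℂ) * θ) * Complex.cos ((π : ℂ) * z * (1 - θ))
    + Complex.sin ((π : ℂ) * (z * (1 - θ) - θ))) / (2 * Complex.sin ((π : ℂ) * z))

theorem Complex.sin_pi_mul_ne_zero {z : ℂ} (hz : ∀ n : ℤ, z ≠ n) : Complex.sin (π * z) ≠ 0 := by
  rw [Complex.sin_ne_zero_iff]
  intro k hk
  refine hz k (mul_left_cancel₀ (Complex.ofReal_ne_zero.mpr Real.pi_ne_zero) ?_)
  rw [hk, mul_comm]

theorem Matrix.det_neg_half_smul_one_add_div {K : Type*} [Field K] [NeZero (2 : K)] {s : K}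
    (hs : s ≠ 0) (a b c d : K) :
    (-(1 / 2 : K) • (1 : Matrix (Fin 2) (Fin 2) K) +
        !![a / (2 * s), b / (2 * s); c / (2 * s), d / (2 * s)]).det
      = ((a - s) * (d - s) - b * c) / (4 * s ^ 2) := by
  have h4 : (4 : K) = 2 * 2 := by norm_num
  rw [Matrix.one_fin_two, Matrix.smul_of, Matrix.of_add_of]
  simp only [Matrix.smul_cons, Matrix.smul_empty, Matrix.cons_add_cons, Matrix.empty_add_empty,
    smul_eq_mul]
  rw [Matrix.det_fin_two_of, h4]
  field_simp
  ring

theorem Complex.sin_cos_factorization (z α β γ : ℂ) :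
    ((z + 1) * sin β * cos α - sin (α + β) - sin (α + γ))
        * ((z + 1) * sin β * cos α + sin (α - β) - sin (α + γ))
      + (z - 1) * (z + 1) * sin β ^ 2 * sin α ^ 2
      = (z * sin β - sin γ) * (z * sin β - sin (2 * α + γ)) := by
  simp only [two_mul, Complex.sin_add, Complex.sin_sub, Complex.cos_add]
  linear_combination (z ^ 2 * sin β ^ 2 - z * sin β * sin γ) * Complex.sin_sq_add_cos_sq α
    + sin α ^ 2 * (Complex.sin_sq_add_cos_sq γ - Complex.sin_sq_add_cos_sq β)

theorem det_A_tone_general (θ : ℝ)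
    (z : ℂ) (hz : ∀ n : ℤ, z ≠ (n : ℂ)) :
    Matrix.det
        (-(1 / 2 : ℂ) • (1 : Matrix (Fin 2) (Fin 2) ℂ) +
          !![a11 z θ, a12 z θ; a21 z θ, a22 z θ])
      = (z * Complex.sin ((π : ℂ) * θ) - Complex.sin ((π : ℂ) * z * θ))
          * (z * Complex.sin ((π : ℂ) * θ) - Complex.sin ((π : ℂ) * z * (2 - θ)))
          / (4 * Complex.sin ((π : ℂ) * z) ^ 2) := by
  have key := Complex.sin_cos_factorization z (π * z * (1 - θ)) (π * θ) (π * z * θ)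
  rw [show π * z * (1 - θ) + π * θ = π * (z * (1 - θ) + θ) by ring,
    show π * z * (1 - θ) - π * θ = π * (z * (1 - θ) - θ) by ring,
    show π * z * (1 - θ) + π * z * θ = π * z by ring,
    show 2 * (π * z * (1 - θ)) + π * z * θ = π * z * (2 - θ) by ring] at key
  rw [a11, a12, a21, a22, Matrix.det_neg_half_smul_one_add_div (Complex.sin_pi_mul_ne_zero hz)]
  congr 1
  linear_combination key

theorem det_A_tone (θ : ℝ) (hθ : θ ∈ Set.Ioo (0 : ℝ) 2) (hθ1 : θ ≠ 1)
    (z : ℂ) (hz : ∀ n : ℤ, z ≠ (n : ℂ)) :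
    Matrix.det
        (-(1 / 2 : ℂ) • (1 : Matrix (Fin 2) (Fin 2) ℂ) +
          !![a11 z θ, a12 z θ; a21 z θ, a22 z θ])
      = (z * Complex.sin ((π : ℂ) * θ) - Complex.sin ((π : ℂ) * z * θ))
          * (z * Complex.sin ((π : ℂ) * θ) - Complex.sin ((π : ℂ) * z * (2 - θ)))
          / (4 * Complex.sin ((π : ℂ) * z) ^ 2) :=
  det_A_tone_general θ z hz
end

section
/- Let θ ∈ (0,2), θ ≠ 1, and define the 2×2 matrix Ã(z,θ) = −(1/2)I − [[a₁₁, a₁₂],[a₂₁, a₂₂]] with the same entries a_{jℓ}(z,θ) as in the previous statement. Then for z ∈ ℂ not an integer, det Ã(z,θ) = (z sin(πθ) + sin(πzθ)) (z sin(πθ) + sin(πz(2−θ))) / (4 sin²(πz)). -/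
open Real

/-!
With `t = πθ`, `w = πz` and `u = πz(1 - θ)`, the arguments on the right are `w ∓ u`. Clearing the
denominator `4 sin² w`, both sides become polynomials in the sines and cosines of `t`, `u`, `w`,
and the identity follows from the product formulas
`sin (x + y) sin (x - y) = sin² x - sin² y` and `sin (x - y) - sin (x + y) = -2 cos x sin y`,
after which `sin² u + cos² u = 1` absorbs the `(z² - 1) sin² t` terms.
-/

namespace Complex

theorem sin_add_mul_sin_sub (x y : ℂ) : sin (x + y) * sin (x - y) = sin x ^ 2 - sin y ^ 2 := by
  rw [sin_add, sin_sub]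
  linear_combination sin x ^ 2 * sin_sq_add_cos_sq y - sin y ^ 2 * sin_sq_add_cos_sq x

theorem sin_pi_mul_ne_zero_s14 {z : ℂ} (hz : ∀ n : ℤ, z ≠ n) : sin (π * z) ≠ 0 := by
  refine sin_ne_zero_iff.2 fun k hk => hz k ?_
  apply mul_left_cancel₀ (ofReal_ne_zero.2 pi_ne_zero)
  rw [hk, mul_comm]

theorem trig_det_numerator (z t u w : ℂ) :
    (sin w + (z + 1) * sin t * cos u - sin (u + t))
        * (sin w + (z + 1) * sin t * cos u + sin (u - t))
      + (z ^ 2 - 1) * sin t ^ 2 * sin u ^ 2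
      = (z * sin t + sin (w - u)) * (z * sin t + sin (w + u)) := by
  have hdiff_u : sin (u - t) - sin (u + t) = -2 * sin t * cos u := by
    rw [sin_sub, sin_add]; ring
  have hsum_w : sin (w - u) + sin (w + u) = 2 * sin w * cos u := by
    rw [sin_sub, sin_add]; ring
  linear_combination (sin w + (z + 1) * sin t * cos u) * hdiff_u - sin_add_mul_sin_sub u t
    - z * sin t * hsum_w - sin_add_mul_sin_sub w u
    + (z ^ 2 - 1) * sin t ^ 2 * sin_sq_add_cos_sq u

end Complex

open Complex in
theorem det_neg_half_smul_one_sub_trig (z t u w : ℂ) (hw : sin w ≠ 0) :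
    Matrix.det (-(1 / 2 : ℂ) • (1 : Matrix (Fin 2) (Fin 2) ℂ) -
        !![((z + 1) * sin t * cos u - sin (u + t)) / (2 * sin w),
            -((z - 1) * sin t * sin u) / (2 * sin w);
           ((z + 1) * sin t * sin u) / (2 * sin w),
            ((z + 1) * sin t * cos u + sin (u - t)) / (2 * sin w)])
      = (z * sin t + sin (w - u)) * (z * sin t + sin (w + u)) / (4 * sin w ^ 2) := by
  rw [Matrix.det_fin_two, ← trig_det_numerator]
  simp only [one_div, neg_smul, Fin.isValue, Matrix.sub_apply, Matrix.neg_apply, Matrix.smul_apply,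
    Matrix.one_apply_eq, smul_eq_mul, mul_one, Matrix.of_apply, Matrix.cons_val', Matrix.cons_val_zero,
    Matrix.cons_val_fin_one, Matrix.cons_val_one, ne_eq, zero_ne_one, not_false_eq_true, Matrix.one_apply_ne,
    mul_zero, neg_zero, zero_sub, one_ne_zero, mul_neg, neg_mul, neg_neg]
  field_simp
  ring

theorem det_A_note_general (θ : ℝ)
    (z : ℂ) (hz : ∀ n : ℤ, z ≠ (n : ℂ)) :
    Matrix.det
        (-(1 / 2 : ℂ) • (1 : Matrix (Fin 2) (Fin 2) ℂ) -
          !![a11 z θ, a12 z θ; a21 z θ, a22 z θ])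
      = (z * Complex.sin ((π : ℂ) * θ) + Complex.sin ((π : ℂ) * z * θ))
          * (z * Complex.sin ((π : ℂ) * θ) + Complex.sin ((π : ℂ) * z * (2 - θ)))
          / (4 * Complex.sin ((π : ℂ) * z) ^ 2) := by
  have h_add : (π : ℂ) * (z * (1 - θ) + θ) = π * z * (1 - θ) + π * θ := by ring
  have h_sub : (π : ℂ) * (z * (1 - θ) - θ) = π * z * (1 - θ) - π * θ := by ring
  have h_left : (π : ℂ) * z * θ = π * z - π * z * (1 - θ) := by ring
  have h_right : (π : ℂ) * z * (2 - θ) = π * z + π * z * (1 - θ) := by ring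
  rw [a11, a12, a21, a22, h_add, h_sub, h_left, h_right]
  exact det_neg_half_smul_one_sub_trig _ _ _ _ (Complex.sin_pi_mul_ne_zero_s14 hz)

theorem det_A_note (θ : ℝ) (hθ : θ ∈ Set.Ioo (0 : ℝ) 2) (hθ1 : θ ≠ 1)
    (z : ℂ) (hz : ∀ n : ℤ, z ≠ (n : ℂ)) :
    Matrix.det
        (-(1 / 2 : ℂ) • (1 : Matrix (Fin 2) (Fin 2) ℂ) -
          !![a11 z θ, a12 z θ; a21 z θ, a22 z θ])
      = (z * Complex.sin ((π : ℂ) * θ) + Complex.sin ((π : ℂ) * z * θ))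
          * (z * Complex.sin ((π : ℂ) * θ) + Complex.sin ((π : ℂ) * z * (2 - θ)))
          / (4 * Complex.sin ((π : ℂ) * z) ^ 2) :=
  det_A_note_general θ z hz
end
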